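/- arXiv:1810.08096 — 3 statements merged into one kernel-verified Lean document; each statement's English description precedes it below -/
import Mathlib

section
/- Let (M, ⪯, ⊕, 0) be an ordered partial commutative monoid that is ⊕-downward closed, i.e. if x ⪯ x' and x' ⊥ y then x ⊥ y. For nonempty subsets P, Q of M define P ⊕ Q := { x ⊕ y : x ∈ P, y ∈ Q, x ⊥ y } (defined when this set is nonempty), and P ⪯♯ Q ⟺ for every y ∈ Q there exists x ∈ P with x ⪯ y. Then (𝒫⁺M, ⪯♯, ⊕, {0}) is an ordered partial commutative monoid. -/
/-!
Combination of possibilities is computed pointwise, so each OPCM law for sets reduces to the same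
law for representatives. The only law whose witnesses cannot be read off directly is the
direction `P ⊕ (Q ⊕ R) ⪯♯ (P ⊕ Q) ⊕ R`: it needs definedness to reassociate from
`(a ⊕ b) ⊕ c` to `a ⊕ (b ⊕ c)`, which the OPCM axioms only give in the opposite direction.
Downward closure of `⊥` supplies it, since `⊥` is then invariant under `≅`; downward closure
is likewise what keeps `x₁ ⊕ y` defined in the monotonicity law.
-/

/-- An ordered partial commutative monoid (OPCM), given by a preorder `le`,
a definedness predicate `D` (written `x ⊥ y` in the paper), a (total extension
of a) partial binary operation `op`, and an identity `zero`.  The equivalence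
`x ≅ y` is `le x y ∧ le y x`. -/
structure IsOPCM {α : Type*} (le : α → α → Prop) (D : α → α → Prop)
    (op : α → α → α) (zero : α) : Prop where
  refl : ∀ x, le x x
  trans : ∀ {x y z}, le x y → le y z → le x z
  zero_defined : ∀ x, D zero x
  zero_op : ∀ x, le (op zero x) x ∧ le x (op zero x)
  comm_defined : ∀ {x y}, D x y → D y x
  comm : ∀ {x y}, D x y → le (op x y) (op y x) ∧ le (op y x) (op x y)
  assoc_defined_left : ∀ {x y z}, D y z → D x (op y z) → D x y
  assoc_defined : ∀ {x y z}, D y z → D x (op y z) → D (op x y) z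
  assoc : ∀ {x y z}, D y z → D x (op y z) →
    le (op x (op y z)) (op (op x y) z) ∧ le (op (op x y) z) (op x (op y z))
  mono : ∀ {x₁ x₂ y}, D x₁ y → D x₂ y → le x₁ x₂ → le (op x₁ y) (op x₂ y)

attribute [local instance] Classical.propDecidable

section

variable {M : Type*} {le D : M → M → Prop} {op : M → M → M} {zero : M}

def DownwardClosed (le D : M → M → Prop) : Prop :=
  ∀ x x' y : M, le x x' → D x' y → D x y

theorem IsOPCM.assoc_defined_rev (h : IsOPCM le D op zero) (hdc : DownwardClosed le D)
    {a b c : M} (hab : D a b) (habc : D (op a b) c) : D b c ∧ D a (op b c) := by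
  have hc_ba : D c (op b a) := h.comm_defined (hdc _ _ _ (h.comm hab).2 habc)
  have hbc : D b c := h.comm_defined (h.assoc_defined_left (h.comm_defined hab) hc_ba)
  have hbc_a : D (op b c) a :=
    hdc _ _ _ (h.comm hbc).1 (h.assoc_defined (h.comm_defined hab) hc_ba)
  exact ⟨hbc, h.comm_defined hbc_a⟩

/-- `P ⪯♯ Q` in the paper. -/
def SmythLE (le : M → M → Prop) (P Q : Set M) : Prop :=
  ∀ y ∈ Q, ∃ x ∈ P, le x y

def pointwiseOp (D : M → M → Prop) (op : M → M → M) (P Q : Set M) : Set M :=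
  {z | ∃ x ∈ P, ∃ y ∈ Q, D x y ∧ z = op x y}

variable {P Q R P₁ P₂ : Set M}

theorem op_mem_pointwiseOp {x y : M} (hx : x ∈ P) (hy : y ∈ Q) (hxy : D x y) :
    op x y ∈ pointwiseOp D op P Q :=
  ⟨x, hx, y, hy, hxy, rfl⟩

theorem SmythLE.refl (hrefl : ∀ x, le x x) (P : Set M) : SmythLE le P P :=
  fun y hy => ⟨y, hy, hrefl y⟩

theorem SmythLE.trans (htrans : ∀ {x y z : M}, le x y → le y z → le x z)
    (hPQ : SmythLE le P Q) (hQR : SmythLE le Q R) : SmythLE le P R := by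
  intro z hz
  obtain ⟨y, hy, hyz⟩ := hQR z hz
  obtain ⟨x, hx, hxy⟩ := hPQ y hy
  exact ⟨x, hx, htrans hxy hyz⟩

theorem SmythLE.pointwiseOp_right (h : IsOPCM le D op zero) (hdc : DownwardClosed le D)
    (h₁₂ : SmythLE le P₁ P₂) : SmythLE le (pointwiseOp D op P₁ Q) (pointwiseOp D op P₂ Q) := by
  rintro _ ⟨a₂, ha₂, b, hb, hab₂, rfl⟩
  obtain ⟨a₁, ha₁, hle⟩ := h₁₂ a₂ ha₂
  have hab₁ : D a₁ b := hdc _ _ _ hle hab₂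
  exact ⟨op a₁ b, op_mem_pointwiseOp ha₁ hb hab₁, h.mono hab₁ hab₂ hle⟩

theorem pointwiseOp_singleton_zero_nonempty (h : IsOPCM le D op zero) (hP : P.Nonempty) :
    (pointwiseOp D op {zero} P).Nonempty :=
  let ⟨x, hx⟩ := hP
  ⟨op zero x, op_mem_pointwiseOp rfl hx (h.zero_defined x)⟩

theorem pointwiseOp_singleton_zero_equiv (h : IsOPCM le D op zero) (P : Set M) :
    SmythLE le (pointwiseOp D op {zero} P) P ∧ SmythLE le P (pointwiseOp D op {zero} P) := by
  constructor
  · intro y hy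
    exact ⟨op zero y, op_mem_pointwiseOp rfl hy (h.zero_defined y), (h.zero_op y).1⟩
  · rintro _ ⟨_, rfl, y, hy, -, rfl⟩
    exact ⟨y, hy, (h.zero_op y).2⟩

theorem pointwiseOp_swap_nonempty (h : IsOPCM le D op zero)
    (hPQ : (pointwiseOp D op P Q).Nonempty) : (pointwiseOp D op Q P).Nonempty :=
  let ⟨_, x, hx, y, hy, hxy, _⟩ := hPQ
  ⟨op y x, op_mem_pointwiseOp hy hx (h.comm_defined hxy)⟩

theorem smythLE_pointwiseOp_swap (h : IsOPCM le D op zero) (P Q : Set M) :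
    SmythLE le (pointwiseOp D op P Q) (pointwiseOp D op Q P) := by
  rintro _ ⟨y, hy, x, hx, hyx, rfl⟩
  exact ⟨op x y, op_mem_pointwiseOp hx hy (h.comm_defined hyx), (h.comm hyx).2⟩

theorem smythLE_pointwiseOp_assoc (h : IsOPCM le D op zero) (hdc : DownwardClosed le D) :
    SmythLE le (pointwiseOp D op P (pointwiseOp D op Q R))
      (pointwiseOp D op (pointwiseOp D op P Q) R) := by
  rintro _ ⟨_, ⟨a, ha, b, hb, hab, rfl⟩, c, hc, habc, rfl⟩
  obtain ⟨hbc, ha_bc⟩ := h.assoc_defined_rev hdc hab habc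
  exact ⟨op a (op b c), op_mem_pointwiseOp ha (op_mem_pointwiseOp hb hc hbc) ha_bc,
    (h.assoc hbc ha_bc).1⟩

theorem smythLE_pointwiseOp_assoc_symm (h : IsOPCM le D op zero) :
    SmythLE le (pointwiseOp D op (pointwiseOp D op P Q) R)
      (pointwiseOp D op P (pointwiseOp D op Q R)) := by
  rintro _ ⟨a, ha, _, ⟨b, hb, c, hc, hbc, rfl⟩, habc, rfl⟩
  exact ⟨op (op a b) c, op_mem_pointwiseOp (op_mem_pointwiseOp ha hb
    (h.assoc_defined_left hbc habc)) hc (h.assoc_defined hbc habc), (h.assoc hbc habc).2⟩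

/-- `P ⊕ Q` on possibilities, extended by `P` where it is undefined. -/
noncomputable def possOp (D : M → M → Prop) (op : M → M → M)
    (P Q : {S : Set M // S.Nonempty}) : {S : Set M // S.Nonempty} :=
  if h : (pointwiseOp D op P.1 Q.1).Nonempty then ⟨_, h⟩ else P

theorem possOp_val {P Q : {S : Set M // S.Nonempty}}
    (hPQ : (pointwiseOp D op P.1 Q.1).Nonempty) :
    (possOp D op P Q).1 = pointwiseOp D op P.1 Q.1 := by
  rw [possOp, dif_pos hPQ]

theorem possOp_assoc_defined_left (h : IsOPCM le D op zero)
    {P Q R : {S : Set M // S.Nonempty}} (hQR : (pointwiseOp D op Q.1 R.1).Nonempty)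
    (hP_QR : (pointwiseOp D op P.1 (possOp D op Q R).1).Nonempty) :
    (pointwiseOp D op P.1 Q.1).Nonempty := by
  rw [possOp_val hQR] at hP_QR
  obtain ⟨_, a, ha, _, ⟨b, hb, _, _, hbc, rfl⟩, habc, _⟩ := hP_QR
  exact ⟨op a b, op_mem_pointwiseOp ha hb (h.assoc_defined_left hbc habc)⟩

theorem possOp_assoc_defined (h : IsOPCM le D op zero)
    {P Q R : {S : Set M // S.Nonempty}} (hQR : (pointwiseOp D op Q.1 R.1).Nonempty)
    (hP_QR : (pointwiseOp D op P.1 (possOp D op Q R).1).Nonempty) :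
    (pointwiseOp D op (possOp D op P Q).1 R.1).Nonempty := by
  rw [possOp_val (possOp_assoc_defined_left h hQR hP_QR)]
  rw [possOp_val hQR] at hP_QR
  obtain ⟨_, a, ha, _, ⟨b, hb, c, hc, hbc, rfl⟩, habc, _⟩ := hP_QR
  exact ⟨op (op a b) c, op_mem_pointwiseOp (op_mem_pointwiseOp ha hb
    (h.assoc_defined_left hbc habc)) hc (h.assoc_defined hbc habc)⟩

theorem IsOPCM.possibilities (h : IsOPCM le D op zero) (hdc : DownwardClosed le D) :
    IsOPCM (fun P Q => SmythLE le P.1 Q.1) (fun P Q => (pointwiseOp D op P.1 Q.1).Nonempty)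
      (possOp D op) ⟨{zero}, Set.singleton_nonempty zero⟩ := by
  constructor
  · exact fun P => SmythLE.refl h.refl P.1
  · exact fun hPQ hQR => hPQ.trans h.trans hQR
  · exact fun P => pointwiseOp_singleton_zero_nonempty h P.2
  · intro P
    rw [possOp_val (pointwiseOp_singleton_zero_nonempty h P.2)]
    exact pointwiseOp_singleton_zero_equiv h P.1
  · exact pointwiseOp_swap_nonempty h
  · intro P Q hPQ
    rw [possOp_val hPQ, possOp_val (pointwiseOp_swap_nonempty h hPQ)]
    exact ⟨smythLE_pointwiseOp_swap h P.1 Q.1, smythLE_pointwiseOp_swap h Q.1 P.1⟩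
  · exact possOp_assoc_defined_left h
  · exact possOp_assoc_defined h
  · intro P Q R hQR hP_QR
    rw [possOp_val hP_QR, possOp_val (possOp_assoc_defined h hQR hP_QR), possOp_val hQR,
      possOp_val (possOp_assoc_defined_left h hQR hP_QR)]
    exact ⟨smythLE_pointwiseOp_assoc h hdc, smythLE_pointwiseOp_assoc_symm h⟩
  · intro P₁ P₂ Q h₁ h₂ h₁₂
    rw [possOp_val h₁, possOp_val h₂]
    exact SmythLE.pointwiseOp_right h hdc h₁₂

end

/-- possibilities over a ⊕-downward closed OPCM: the nonempty
subsets of `M`, with `P ⪯♯ Q` and elementwise combination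
`P ⊕ Q = { x ⊕ y | x ∈ P, y ∈ Q, x ⊥ y }` (defined when nonempty) and
identity `{0}`, form an OPCM. -/
theorem possibilities_over_OPCM {M : Type*} (le D : M → M → Prop)
    (op : M → M → M) (zero : M)
    (h : IsOPCM le D op zero)
    (hdc : ∀ x x' y : M, le x x' → D x' y → D x y) :
    IsOPCM (α := {S : Set M // S.Nonempty})
      (fun P Q => ∀ y ∈ Q.val, ∃ x ∈ P.val, le x y)
      (fun P Q => {z : M | ∃ x ∈ P.val, ∃ y ∈ Q.val, D x y ∧ z = op x y}.Nonempty)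
      (fun P Q =>
        if h' : {z : M | ∃ x ∈ P.val, ∃ y ∈ Q.val, D x y ∧ z = op x y}.Nonempty
        then ⟨{z : M | ∃ x ∈ P.val, ∃ y ∈ Q.val, D x y ∧ z = op x y}, h'⟩ else P)
      ⟨{zero}, Set.singleton_nonempty zero⟩ :=
  h.possibilities hdc
end

section
/- Let (f_i, g_i)_{i=1,2} be a linking passage of ordered partial commutative monoids M₁ and M₂, i.e. changes of domain g_i : K → M_i and f_i : M_i → N with f₁(g₁(k)) ≅ f₂(g₂(k)) for all k ∈ K. Let g₁* be the upper adjoint of g₁ and f₂* the upper adjoint of f₂. Then for every x ∈ M₁, g₂(g₁*(x)) ⪯ f₂*(f₁(x)). -/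
structure IsOPCMHom {α β : Type*}
    (leM : α → α → Prop) (DM : α → α → Prop) (opM : α → α → α) (zM : α)
    (leN : β → β → Prop) (DN : β → β → Prop) (opN : β → β → β) (zN : β)
    (f : α → β) : Prop where
  mono : ∀ {x y}, leM x y → leN (f x) (f y)
  zero : leN (f zM) zN ∧ leN zN (f zM)
  defined : ∀ {x y}, DM x y → DN (f x) (f y)
  op : ∀ {x y}, DM x y → leN (f (opM x y)) (opN (f x) (f y)) ∧
    leN (opN (f x) (f y)) (f (opM x y))

theorem lowerAdjoint_upperAdjoint_le {α β : Type*} {leα : α → α → Prop} {leβ : β → β → Prop}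
    {g : β → α} {gs : α → β} (hrefl : ∀ k, leβ k k)
    (hgc : ∀ (k : β) (m : α), leα (g k) m ↔ leβ k (gs m)) (m : α) :
    leα (g (gs m)) m :=
  (hgc _ _).mpr (hrefl _)

theorem linking_passage_two_extensions_general {K M₁ M₂ N : Type*}
    (leK DK : K → K → Prop) (opK : K → K → K) (zK : K)
    (le₁ D₁ : M₁ → M₁ → Prop) (op₁ : M₁ → M₁ → M₁) (z₁ : M₁)
    (le₂ : M₂ → M₂ → Prop)
    (leN DN : N → N → Prop) (opN : N → N → N) (zN : N)
    (hK : IsOPCM leK DK opK zK) (hN : IsOPCM leN DN opN zN)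
    (g₁ : K → M₁) (g₂ : K → M₂) (f₁ : M₁ → N) (f₂ : M₂ → N)
    (hf₁ : IsOPCMHom le₁ D₁ op₁ z₁ leN DN opN zN f₁)
    -- each of the four maps is a lower adjoint (change of domain)
    (g₁s : M₁ → K)
    (hg₁gc : ∀ (k : K) (m : M₁), le₁ (g₁ k) m ↔ leK k (g₁s m))
    (f₂s : N → M₂)
    (hf₂gc : ∀ (m : M₂) (n : N), leN (f₂ m) n ↔ le₂ m (f₂s n))
    -- the square commutes up to equivalence
    (hcomm : ∀ k : K, leN (f₁ (g₁ k)) (f₂ (g₂ k)) ∧ leN (f₂ (g₂ k)) (f₁ (g₁ k))) :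
    ∀ x : M₁, le₂ (g₂ (g₁s x)) (f₂s (f₁ x)) := by
  intro x
  rw [← hf₂gc]
  exact hN.trans (hcomm (g₁s x)).2 (hf₁.mono (lowerAdjoint_upperAdjoint_le hK.refl hg₁gc x))

/-- given a linking passage `(fᵢ, gᵢ)` of `M₁` and `M₂` (changes of
domain `gᵢ : K → Mᵢ`, `fᵢ : Mᵢ → N` commuting up to `≅`), transferring
information from `M₁` to `M₂` through the common domain `K` is below
transferring it through the larger domain `N`: `g₂ (g₁* x) ⪯ f₂* (f₁ x)`. -/
theorem linking_passage_two_extensions {K M₁ M₂ N : Type*}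
    (leK DK : K → K → Prop) (opK : K → K → K) (zK : K)
    (le₁ D₁ : M₁ → M₁ → Prop) (op₁ : M₁ → M₁ → M₁) (z₁ : M₁)
    (le₂ D₂ : M₂ → M₂ → Prop) (op₂ : M₂ → M₂ → M₂) (z₂ : M₂)
    (leN DN : N → N → Prop) (opN : N → N → N) (zN : N)
    (hK : IsOPCM leK DK opK zK) (h₁ : IsOPCM le₁ D₁ op₁ z₁)
    (h₂ : IsOPCM le₂ D₂ op₂ z₂) (hN : IsOPCM leN DN opN zN)
    (g₁ : K → M₁) (g₂ : K → M₂) (f₁ : M₁ → N) (f₂ : M₂ → N)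
    (hg₁ : IsOPCMHom leK DK opK zK le₁ D₁ op₁ z₁ g₁)
    (hg₂ : IsOPCMHom leK DK opK zK le₂ D₂ op₂ z₂ g₂)
    (hf₁ : IsOPCMHom le₁ D₁ op₁ z₁ leN DN opN zN f₁)
    (hf₂ : IsOPCMHom le₂ D₂ op₂ z₂ leN DN opN zN f₂)
    -- each of the four maps is a lower adjoint (change of domain)
    (g₁s : M₁ → K) (hg₁s_mono : ∀ {a b}, le₁ a b → leK (g₁s a) (g₁s b))
    (hg₁gc : ∀ (k : K) (m : M₁), le₁ (g₁ k) m ↔ leK k (g₁s m))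
    (g₂s : M₂ → K) (hg₂s_mono : ∀ {a b}, le₂ a b → leK (g₂s a) (g₂s b))
    (hg₂gc : ∀ (k : K) (m : M₂), le₂ (g₂ k) m ↔ leK k (g₂s m))
    (f₁s : N → M₁) (hf₁s_mono : ∀ {a b}, leN a b → le₁ (f₁s a) (f₁s b))
    (hf₁gc : ∀ (m : M₁) (n : N), leN (f₁ m) n ↔ le₁ m (f₁s n))
    (f₂s : N → M₂) (hf₂s_mono : ∀ {a b}, leN a b → le₂ (f₂s a) (f₂s b))
    (hf₂gc : ∀ (m : M₂) (n : N), leN (f₂ m) n ↔ le₂ m (f₂s n))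
    -- the square commutes up to equivalence
    (hcomm : ∀ k : K, leN (f₁ (g₁ k)) (f₂ (g₂ k)) ∧ leN (f₂ (g₂ k)) (f₁ (g₁ k))) :
    ∀ x : M₁, le₂ (g₂ (g₁s x)) (f₂s (f₁ x)) :=
  linking_passage_two_extensions_general leK DK opK zK le₁ D₁ op₁ z₁ le₂ leN DN opN zN hK hN g₁ g₂
    f₁ f₂ hf₁ g₁s hg₁gc f₂s hf₂gc hcomm
end

section
/- Let (Φ, ≤, D; ⊗, d, ↓, e) be an ordered valuation algebra and define the extended relation φ ≤' ψ ⟺ d(φ) ≤ d(ψ) and φ ⊗ e_{d(ψ)} ≤ ψ. Then: (1) if φ₁ ≤' ψ₁ and φ₂ ≤' ψ₂, then φ₁ ⊗ φ₂ ≤' ψ₁ ⊗ ψ₂; (2) if φ ≤' ψ and x ≤ d(φ), then φ↓x ≤' ψ↓x; moreover (φ ⊗ e_{d(ψ)})↓x = φ↓x for x ≤ d(φ). -/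
/-- A (stable) ordered valuation algebra `(Φ, ≤, D; ⊗, d, ↓, e)`:
a partially ordered set `Φ` of valuations, a bounded lattice `D` of domains,
a combination `comb`, a domain map `dom`, a focusing operation `focus`
(a total extension of the partial operation `φ↓x`, defined for `x ≤ dom φ`),
and identity elements `e x`. -/
structure OVA (Φ : Type*) (D : Type*) [PartialOrder Φ] [Lattice D] [BoundedOrder D] where
  comb : Φ → Φ → Φ
  dom : Φ → D
  focus : Φ → D → Φ
  e : D → Φ
  comb_comm : ∀ φ ψ, comb φ ψ = comb ψ φ
  comb_assoc : ∀ φ ψ χ, comb (comb φ ψ) χ = comb φ (comb ψ χ)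
  dom_eq_of_le : ∀ {φ ψ}, φ ≤ ψ → dom φ = dom ψ
  dom_e : ∀ x, dom (e x) = x
  e_comb_e : ∀ x y, comb (e x) (e y) = e (x ⊔ y)
  comb_e : ∀ (φ : Φ) (x : D), dom φ = x → comb φ (e x) = φ
  focus_e : ∀ {x y : D}, x ≤ y → focus (e y) x = e x
  dom_comb : ∀ φ ψ, dom (comb φ ψ) = dom φ ⊔ dom ψ
  dom_focus : ∀ {φ : Φ} {x : D}, x ≤ dom φ → dom (focus φ x) = x
  focus_focus : ∀ {φ : Φ} {x y : D}, x ≤ y → y ≤ dom φ →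
    focus (focus φ y) x = focus φ x
  focus_comb : ∀ φ ψ, focus (comb φ ψ) (dom φ) = comb φ (focus ψ (dom φ ⊓ dom ψ))
  comb_mono : ∀ {φ₁ ψ₁ φ₂ ψ₂ : Φ}, φ₁ ≤ ψ₁ → φ₂ ≤ ψ₂ → comb φ₁ φ₂ ≤ comb ψ₁ ψ₂
  focus_mono : ∀ {φ ψ : Φ} {x : D}, φ ≤ ψ → x ≤ dom φ → focus φ x ≤ focus ψ x

/-! Adjoining a neutral element `e_y` with `d φ ≤ y` and focusing back to `d φ` returns `φ`
(by the combination axiom and `e_y↓(d φ) = e_{d φ}`), so by transitivity of focusing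
`(φ ⊗ e_y)↓x = φ↓x` for every `x ≤ d φ`. Preservation of `≤'` under focusing follows from this
and monotonicity of focusing; under combination, the neutral element `e_{d ψ₁ ∨ d ψ₂}` splits as
`e_{d ψ₁} ⊗ e_{d ψ₂}`, and monotonicity of combination applies factorwise. -/

namespace OVA

variable {Φ D : Type*} [PartialOrder Φ] [Lattice D] [BoundedOrder D] (V : OVA Φ D)

/-- The extended relation `φ ≤' ψ`. -/
def ExtLE (φ ψ : Φ) : Prop :=
  V.dom φ ≤ V.dom ψ ∧ V.comb φ (V.e (V.dom ψ)) ≤ ψ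

theorem comb_comb_comb_comm (φ₁ φ₂ ψ₁ ψ₂ : Φ) :
    V.comb (V.comb φ₁ φ₂) (V.comb ψ₁ ψ₂) = V.comb (V.comb φ₁ ψ₁) (V.comb φ₂ ψ₂) := by
  rw [V.comb_assoc, V.comb_assoc, ← V.comb_assoc φ₂, V.comb_comm φ₂ ψ₁, V.comb_assoc]

theorem focus_comb_e_dom {φ : Φ} {y : D} (hy : V.dom φ ≤ y) :
    V.focus (V.comb φ (V.e y)) (V.dom φ) = φ := by
  rw [V.focus_comb, V.dom_e, inf_eq_left.mpr hy, V.focus_e hy, V.comb_e φ _ rfl]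

theorem focus_comb_e {φ : Φ} {x y : D} (hy : V.dom φ ≤ y) (hx : x ≤ V.dom φ) :
    V.focus (V.comb φ (V.e y)) x = V.focus φ x := by
  have hdom : V.dom φ ≤ V.dom (V.comb φ (V.e y)) := by
    rw [V.dom_comb]
    exact le_sup_left
  rw [← V.focus_focus hx hdom, V.focus_comb_e_dom hy]

variable {V}

theorem ExtLE.comb {φ₁ ψ₁ φ₂ ψ₂ : Φ} (h₁ : V.ExtLE φ₁ ψ₁) (h₂ : V.ExtLE φ₂ ψ₂) :
    V.ExtLE (V.comb φ₁ φ₂) (V.comb ψ₁ ψ₂) := by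
  refine ⟨?_, ?_⟩
  · rw [V.dom_comb, V.dom_comb]
    exact sup_le_sup h₁.1 h₂.1
  · rw [V.dom_comb, ← V.e_comb_e, V.comb_comb_comb_comm]
    exact V.comb_mono h₁.2 h₂.2

theorem ExtLE.focus {φ ψ : Φ} {x : D} (h : V.ExtLE φ ψ) (hx : x ≤ V.dom φ) :
    V.ExtLE (V.focus φ x) (V.focus ψ x) := by
  have hxψ : x ≤ V.dom ψ := hx.trans h.1
  refine ⟨by rw [V.dom_focus hx, V.dom_focus hxψ], ?_⟩
  have hx' : x ≤ V.dom (V.comb φ (V.e (V.dom ψ))) := by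
    rw [V.dom_comb, V.dom_e]
    exact le_sup_of_le_right hxψ
  rw [V.dom_focus hxψ, V.comb_e _ _ (V.dom_focus hx), ← V.focus_comb_e h.1 hx]
  exact V.focus_mono h.2 hx'

end OVA

/-- the canonically extended relation
`φ ≤' ψ ↔ d φ ≤ d ψ ∧ φ ⊗ e_{d ψ} ≤ ψ` of an ordered valuation algebra is
preserved by combination and by focusing; moreover
`(φ ⊗ e_{d ψ})↓x = φ↓x` for `x ≤ d φ`. -/
theorem OVA_extended_order {Φ D : Type*} [PartialOrder Φ] [Lattice D] [BoundedOrder D]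
    (V : OVA Φ D) :
    -- (1) combination preserves ≤'
    (∀ φ₁ ψ₁ φ₂ ψ₂ : Φ,
      (V.dom φ₁ ≤ V.dom ψ₁ ∧ V.comb φ₁ (V.e (V.dom ψ₁)) ≤ ψ₁) →
      (V.dom φ₂ ≤ V.dom ψ₂ ∧ V.comb φ₂ (V.e (V.dom ψ₂)) ≤ ψ₂) →
      (V.dom (V.comb φ₁ φ₂) ≤ V.dom (V.comb ψ₁ ψ₂) ∧
        V.comb (V.comb φ₁ φ₂) (V.e (V.dom (V.comb ψ₁ ψ₂))) ≤ V.comb ψ₁ ψ₂)) ∧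
    -- (2) focusing preserves ≤', and (φ ⊗ e_{d ψ})↓x = φ↓x
    (∀ (φ ψ : Φ) (x : D),
      (V.dom φ ≤ V.dom ψ ∧ V.comb φ (V.e (V.dom ψ)) ≤ ψ) → x ≤ V.dom φ →
      ((V.dom (V.focus φ x) ≤ V.dom (V.focus ψ x) ∧
         V.comb (V.focus φ x) (V.e (V.dom (V.focus ψ x))) ≤ V.focus ψ x) ∧
       V.focus (V.comb φ (V.e (V.dom ψ))) x = V.focus φ x)) :=
  ⟨fun _ _ _ _ h₁ h₂ => OVA.ExtLE.comb h₁ h₂,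
    fun _ _ _ h hx => ⟨OVA.ExtLE.focus h hx, V.focus_comb_e h.1 hx⟩⟩
end
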